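/- The matrix-valued map B : ℝ³ \ {0} → ℝ^{3×3}, B(z)_{ij} = (δ_{ij}|z|² − z_i z_j)/|z|³, is Lipschitz continuous with Lipschitz constant 2 on the set {z ∈ ℝ³ : |z| ≥ 1}; i.e., |B(z) − B(w)| ≤ 2·|z − w| for all z, w with |z|,|w| ≥ 1, where |·| on matrices is the Frobenius norm. -/

import Mathlib

open Real Finset

noncomputable def Bmat (z : EuclideanSpace ℝ (Fin 3)) : Matrix (Fin 3) (Fin 3) ℝ :=
  fun i j => ((if i = j then (1:ℝ) else 0) * ‖z‖ ^ 2 - z i * z j) / ‖z‖ ^ 3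

noncomputable def frobNorm (A : Matrix (Fin 3) (Fin 3) ℝ) : ℝ :=
  Real.sqrt (∑ i, ∑ j, (A i j) ^ 2)

/-!
With `a = ‖z‖`, `b = ‖w‖`, `s = ⟪z, w⟫`, the Frobenius inner product of `Bmat z` and `Bmat w` is
`(a²b² + s²)/(a³b³)`, so `‖Bmat z - Bmat w‖² = 2(a - b)²/(ab)² + 2(ab - s)(ab + s)/(ab)³`, while
`‖z - w‖² = (a - b)² + 2(ab - s)`. For `a, b ≥ 1` the two terms are bounded by `(a - b)²` and
`4(ab - s)` respectively.
-/

open scoped RealInnerProductSpace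

lemma sum_Bmat_mul_Bmat (z w : EuclideanSpace ℝ (Fin 3)) :
    ∑ i, ∑ j, Bmat z i j * Bmat w i j =
      (‖z‖ ^ 2 * ‖w‖ ^ 2 + ⟪z, w⟫ ^ 2) / (‖z‖ ^ 3 * ‖w‖ ^ 3) := by
  have hz := EuclideanSpace.real_norm_sq_eq z
  have hw := EuclideanSpace.real_norm_sq_eq w
  simp only [Bmat, div_mul_div_comm, ← Finset.sum_div]
  congr 1
  simp only [EuclideanSpace.inner_eq_star_dotProduct, dotProduct, Pi.star_apply, star_trivial,
    Fin.sum_univ_three, Fin.isValue, Fin.reduceEq, ↓reduceIte] at *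
  linear_combination ‖z‖ ^ 2 * hw + ‖w‖ ^ 2 * hz

lemma sum_sq_Bmat_sub (z w : EuclideanSpace ℝ (Fin 3)) (hz : z ≠ 0) (hw : w ≠ 0) :
    ∑ i, ∑ j, (Bmat z - Bmat w) i j ^ 2 =
      2 / ‖z‖ ^ 2 + 2 / ‖w‖ ^ 2 - 2 * (‖z‖ ^ 2 * ‖w‖ ^ 2 + ⟪z, w⟫ ^ 2) / (‖z‖ ^ 3 * ‖w‖ ^ 3) := by
  have expand : ∀ i j, (Bmat z - Bmat w) i j ^ 2 =
      Bmat z i j * Bmat z i j - 2 * (Bmat z i j * Bmat w i j) + Bmat w i j * Bmat w i j := by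
    intro i j; rw [Matrix.sub_apply]; ring
  simp only [expand, Finset.sum_add_distrib, Finset.sum_sub_distrib, ← Finset.mul_sum,
    sum_Bmat_mul_Bmat, real_inner_self_eq_norm_sq]
  have := norm_ne_zero_iff.2 hz
  have := norm_ne_zero_iff.2 hw
  field_simp
  ring

lemma two_div_sq_add_two_div_sq_sub_le {a b s : ℝ} (ha : 1 ≤ a) (hb : 1 ≤ b) (hs : s ≤ a * b) :
    2 / a ^ 2 + 2 / b ^ 2 - 2 * (a ^ 2 * b ^ 2 + s ^ 2) / (a ^ 3 * b ^ 3) ≤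
      4 * (a ^ 2 + b ^ 2 - 2 * s) := by
  have hab : 1 ≤ a * b := one_le_mul_of_one_le_of_one_le ha hb
  have decomp : 2 / a ^ 2 + 2 / b ^ 2 - 2 * (a ^ 2 * b ^ 2 + s ^ 2) / (a ^ 3 * b ^ 3) =
      2 * ((a - b) ^ 2 / (a * b) ^ 2) + 2 * ((a * b - s) * (a * b + s) / (a * b) ^ 3) := by
    have : a ≠ 0 := by positivity
    have : b ≠ 0 := by positivity
    field_simp
    ring
  have radial : (a - b) ^ 2 / (a * b) ^ 2 ≤ (a - b) ^ 2 :=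
    div_le_self (sq_nonneg _) (one_le_pow₀ hab)
  have angular : (a * b - s) * (a * b + s) / (a * b) ^ 3 ≤ 4 * (a * b - s) := by
    have hcube : a * b + s ≤ 4 * (a * b) ^ 3 := by
      linarith [le_self_pow₀ hab (n := 3) (by norm_num)]
    rw [div_le_iff₀ (by positivity)]
    linarith [mul_le_mul_of_nonneg_left hcube (sub_nonneg.2 hs)]
  have split : a ^ 2 + b ^ 2 - 2 * s = (a - b) ^ 2 + 2 * (a * b - s) := by ring
  rw [decomp, split]
  linarith [sq_nonneg (a - b)]

theorem stmt_3 (z w : EuclideanSpace ℝ (Fin 3)) (hz : 1 ≤ ‖z‖) (hw : 1 ≤ ‖w‖) :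
    frobNorm (Bmat z - Bmat w) ≤ 2 * ‖z - w‖ := by
  have hz0 : z ≠ 0 := norm_pos_iff.1 (by linarith)
  have hw0 : w ≠ 0 := norm_pos_iff.1 (by linarith)
  rw [frobNorm, Real.sqrt_le_left (by positivity), sum_sq_Bmat_sub z w hz0 hw0, mul_pow,
    norm_sub_sq_real]
  linarith [two_div_sq_add_two_div_sq_sub_le hz hw (real_inner_le_norm z w)]
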